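/- arXiv:2304.11459 — 11 statements merged into one kernel-verified Lean document; each statement's English description precedes it below -/
import Mathlib

section
/- The function α ↦ 1 + 1/((α-1)(1 - (1 + √(1 - 2/α))^{-1})) is strictly decreasing on (2, ∞). -/
/-! On `(2, ∞)` the denominator is the product of the positive increasing factors `α - 1` and
`1 - (1 + √(1 - 2/α))⁻¹`, so its reciprocal is decreasing. -/

open Real Set

lemma StrictMonoOn.mul_of_nonneg {α M₀ : Type*} [Preorder α] [MulZeroClass M₀] [PartialOrder M₀]
    [PosMulStrictMono M₀] [MulPosStrictMono M₀] {f g : α → M₀} {s : Set α}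
    (hf : StrictMonoOn f s) (hg : StrictMonoOn g s) (hf₀ : ∀ x ∈ s, 0 ≤ f x)
    (hg₀ : ∀ x ∈ s, 0 ≤ g x) : StrictMonoOn (f * g) s :=
  fun _ ha _ hb h ↦ mul_lt_mul'' (hf ha hb h) (hg ha hb h) (hf₀ _ ha) (hg₀ _ ha)

lemma strictMonoOn_sqrt_one_sub_two_div : StrictMonoOn (fun α : ℝ ↦ √(1 - 2 / α)) (Ici 2) := by
  intro a ha b _ hab
  have ha₀ : 0 < a := by linarith [mem_Ici.1 ha]
  have h2a : 2 / a ≤ 1 := (div_le_one ha₀).2 (mem_Ici.1 ha)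
  have h2ab : 2 / b < 2 / a := div_lt_div_of_pos_left two_pos ha₀ hab
  exact sqrt_lt_sqrt (by linarith) (by linarith)

lemma sqrt_one_sub_two_div_pos {α : ℝ} (hα : 2 < α) : 0 < √(1 - 2 / α) :=
  sqrt_pos.2 <| sub_pos.2 <| (div_lt_one (by linarith)).2 hα

lemma strictMonoOn_one_sub_inv_one_add : StrictMonoOn (fun s : ℝ ↦ 1 - (1 + s)⁻¹) (Ioi (-1)) :=
  fun a ha _ _ hab ↦ sub_lt_sub_left (inv_strictAnti₀ (by linarith [mem_Ioi.1 ha]) (by linarith)) 1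

lemma one_sub_inv_one_add_pos {s : ℝ} (hs : 0 < s) : 0 < 1 - (1 + s)⁻¹ :=
  sub_pos.2 <| inv_lt_one_of_one_lt₀ (by linarith)

theorem pareto_bound_strictAnti :
    StrictAntiOn (fun α : ℝ => 1 + 1 / ((α - 1) * (1 - (1 + Real.sqrt (1 - 2 / α))⁻¹)))
      (Set.Ioi (2 : ℝ)) := by
  have hfactor : StrictMonoOn (fun α : ℝ ↦ 1 - (1 + √(1 - 2 / α))⁻¹) (Ioi 2) :=
    strictMonoOn_one_sub_inv_one_add.comp
      (strictMonoOn_sqrt_one_sub_two_div.mono Ioi_subset_Ici_self)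
      fun α hα ↦ mem_Ioi.2 <| by linarith [sqrt_one_sub_two_div_pos (mem_Ioi.1 hα)]
  have hdenom : StrictMonoOn (fun α : ℝ ↦ (α - 1) * (1 - (1 + √(1 - 2 / α))⁻¹)) (Ioi 2) :=
    StrictMonoOn.mul_of_nonneg (fun _ _ _ _ h ↦ sub_lt_sub_right h 1) hfactor
      (fun α hα ↦ by linarith [mem_Ioi.1 hα])
      fun α hα ↦ (one_sub_inv_one_add_pos (sqrt_one_sub_two_div_pos (mem_Ioi.1 hα))).le
  have hdenom_pos : ∀ α ∈ Ioi (2 : ℝ), 0 < (α - 1) * (1 - (1 + √(1 - 2 / α))⁻¹) :=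
    fun α hα ↦ mul_pos (by linarith [mem_Ioi.1 hα])
      (one_sub_inv_one_add_pos (sqrt_one_sub_two_div_pos (mem_Ioi.1 hα)))
  simpa only [one_div, Function.comp_def] using
    (strictAntiOn_inv_pos.comp_strictMonoOn hdenom hdenom_pos).const_add 1
end

section
/- For a Pareto random variable X with scale x_m > 0 and shape α > 2, the probability P(|X - E[X]| ≤ √Var(X)) tends to 1 - e^{-2} ≈ 0.8646647 as α → ∞, and is strictly greater than 1 - e^{-2} > 0.6827 for all α > 2. -/
open Real MeasureTheory Set Filter

noncomputable def paretoC (α : ℝ) : ℝ :=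
  α / (α - 1) + Real.sqrt (α / ((α - 1) ^ 2 * (α - 2)))

lemma paretoC_sqrt (α : ℝ) (hα : 2 < α) :
    Real.sqrt (α / ((α - 1) ^ 2 * (α - 2))) = Real.sqrt (α / (α - 2)) / (α - 1) := by
  have h1 : (0:ℝ) < α - 1 := by linarith
  have h2 : (0:ℝ) < α - 2 := by linarith
  rw [show α / ((α - 1) ^ 2 * (α - 2)) = (α / (α - 2)) / (α - 1) ^ 2 by
    rw [div_div, mul_comm]]
  rw [Real.sqrt_div (by positivity), Real.sqrt_sq h1.le]

lemma paretoC_one_lt (α : ℝ) (hα : 2 < α) : 1 < paretoC α := by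
  have h1 : (0:ℝ) < α - 1 := by linarith
  have : 1 < α / (α - 1) := by rw [lt_div_iff₀ h1]; linarith
  have := Real.sqrt_nonneg (α / ((α - 1) ^ 2 * (α - 2)))
  rw [paretoC]; linarith

lemma paretoC_gt (α : ℝ) (hα : 2 < α) : (α / (α - 1)) ^ 2 < paretoC α := by
  have h1 : (0:ℝ) < α - 1 := by linarith
  have h2 : (0:ℝ) < α - 2 := by linarith
  have hs : α / (α - 1) < Real.sqrt (α / (α - 2)) := by
    rw [Real.lt_sqrt (by positivity), div_pow,
      div_lt_div_iff₀ (by positivity) (by positivity)]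
    nlinarith
  have hαs : α < Real.sqrt (α / (α - 2)) * (α - 1) := (div_lt_iff₀ h1).mp hs
  rw [paretoC, paretoC_sqrt α hα, ← add_div, div_pow,
    div_lt_div_iff₀ (by positivity) h1]
  nlinarith [Real.sqrt_nonneg (α / (α - 2))]

lemma key_lower (α : ℝ) (hα : 2 < α) : 2 < α * Real.log (paretoC α) := by
  have h0 : (0:ℝ) < α := by linarith
  have h1 : (0:ℝ) < α - 1 := by linarith
  have hlog1 : Real.log ((α - 1) / α) < (α - 1) / α - 1 :=
    Real.log_lt_sub_one_of_pos (by positivity)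
      (by intro h; rw [div_eq_one_iff_eq (ne_of_gt h0)] at h; linarith)
  have heq : (α - 1) / α - 1 = -(1 / α) := by field_simp; ring
  have hlogdiv : 1 / α < Real.log (α / (α - 1)) := by
    rw [Real.log_div (ne_of_gt h0) (ne_of_gt h1)]
    rw [Real.log_div (ne_of_gt h1) (ne_of_gt h0)] at hlog1
    rw [heq] at hlog1; linarith
  have hc : Real.log ((α / (α - 1)) ^ 2) < Real.log (paretoC α) :=
    Real.log_lt_log (by positivity) (paretoC_gt α hα)
  rw [Real.log_pow] at hc
  have : 2 * (1 / α) < Real.log (paretoC α) := by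
    push_cast at hc; linarith
  calc (2:ℝ) = α * (2 * (1 / α)) := by field_simp
    _ < α * Real.log (paretoC α) := by
        exact mul_lt_mul_of_pos_left this h0

lemma key_upper (α : ℝ) (hα : 2 < α) :
    α * Real.log (paretoC α) ≤ (1 + (α - 1)⁻¹) * (2 + (α - 2)⁻¹) := by
  have h0 : (0:ℝ) < α := by linarith
  have h1 : (0:ℝ) < α - 1 := by linarith
  have h2 : (0:ℝ) < α - 2 := by linarith
  have hs : Real.sqrt (α / (α - 2)) ≤ 1 + 1 / (α - 2) := by
    have hle : α / (α - 2) ≤ (1 + 1 / (α - 2)) ^ 2 := by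
      rw [div_le_iff₀ h2]
      have hexp : (1 + 1 / (α - 2)) ^ 2 * (α - 2) = (α - 2) + 2 + 1 / (α - 2) := by
        field_simp; ring
      rw [hexp]
      have : 0 < 1 / (α - 2) := by positivity
      linarith
    calc Real.sqrt (α / (α - 2)) ≤ Real.sqrt ((1 + 1 / (α - 2)) ^ 2) :=
          Real.sqrt_le_sqrt hle
      _ = 1 + 1 / (α - 2) := Real.sqrt_sq (by positivity)
  have hcval : paretoC α = (α + Real.sqrt (α / (α - 2))) / (α - 1) := by
    rw [paretoC, paretoC_sqrt α hα, ← add_div]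
  have hlog : Real.log (paretoC α) ≤ paretoC α - 1 :=
    Real.log_le_sub_one_of_pos (lt_trans one_pos (paretoC_one_lt α hα))
  have hcu : paretoC α - 1 ≤ (2 + 1 / (α - 2)) / (α - 1) := by
    rw [hcval]
    have hgen : ∀ s : ℝ, (α + s) / (α - 1) - 1 = (1 + s) / (α - 1) := fun s => by
      field_simp; ring
    rw [hgen]
    exact (div_le_div_iff_of_pos_right h1).mpr (by linarith)
  calc α * Real.log (paretoC α) ≤ α * ((2 + 1 / (α - 2)) / (α - 1)) := by
        apply mul_le_mul_of_nonneg_left (hlog.trans (by linarith)) h0.le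
    _ = (1 + (α - 1)⁻¹) * (2 + (α - 2)⁻¹) := by field_simp; ring

lemma L_tendsto : Tendsto (fun α : ℝ => α * Real.log (paretoC α)) atTop (nhds 2) := by
  have t1 : Tendsto (fun α : ℝ => (α - 1)⁻¹) atTop (nhds 0) := by
    apply Filter.Tendsto.inv_tendsto_atTop
    exact tendsto_atTop_add_const_right atTop (-1) tendsto_id
  have t2 : Tendsto (fun α : ℝ => (α - 2)⁻¹) atTop (nhds 0) := by
    apply Filter.Tendsto.inv_tendsto_atTop
    exact tendsto_atTop_add_const_right atTop (-2) tendsto_id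
  have tub : Tendsto (fun α : ℝ => (1 + (α - 1)⁻¹) * (2 + (α - 2)⁻¹)) atTop
      (nhds ((1 + 0) * (2 + 0))) :=
    (tendsto_const_nhds.add t1).mul (tendsto_const_nhds.add t2)
  norm_num at tub
  refine tendsto_of_tendsto_of_tendsto_of_le_of_le' tendsto_const_nhds tub ?_ ?_
  · filter_upwards [eventually_gt_atTop (2:ℝ)] with α hα
    exact (key_lower α hα).le
  · filter_upwards [eventually_gt_atTop (2:ℝ)] with α hα
    exact key_upper α hα

lemma pareto_measure (xm : ℝ) (hxm : 0 < xm)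
    (P : ℝ → Measure ℝ)
    (hcdf : ∀ α : ℝ, 2 < α → ∀ x : ℝ, xm ≤ x → ((P α) (Set.Iic x)).toReal = 1 - (xm / x) ^ α)
    (hcdf0 : ∀ α : ℝ, 2 < α → ∀ x : ℝ, x < xm → (P α) (Set.Iic x) = 0)
    (α : ℝ) (hα : 2 < α) :
    ((P α) {x : ℝ | |x - α * xm / (α - 1)| ≤
        Real.sqrt (α * xm ^ 2 / ((α - 1) ^ 2 * (α - 2)))}).toReal
      = 1 - Real.exp (-(α * Real.log (paretoC α))) := by
  have h0 : (0:ℝ) < α := by linarith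
  have h1 : (0:ℝ) < α - 1 := by linarith
  have h2 : (0:ℝ) < α - 2 := by linarith
  set μ := α * xm / (α - 1) with hμ
  set σ := Real.sqrt (α * xm ^ 2 / ((α - 1) ^ 2 * (α - 2))) with hσdef
  have hσ : σ = xm * Real.sqrt (α / ((α - 1) ^ 2 * (α - 2))) := by
    rw [hσdef, show α * xm ^ 2 / ((α - 1) ^ 2 * (α - 2))
        = xm ^ 2 * (α / ((α - 1) ^ 2 * (α - 2))) by ring,
      Real.sqrt_mul (sq_nonneg xm), Real.sqrt_sq hxm.le]
  have hset : {x : ℝ | |x - μ| ≤ σ} = Icc (μ - σ) (μ + σ) := by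
    ext x
    simp only [Set.mem_setOf_eq, Set.mem_Icc, abs_le]
    constructor <;> rintro ⟨ha, hb⟩ <;> exact ⟨by linarith, by linarith⟩
  have hb : μ + σ = xm * paretoC α := by
    rw [hσ, paretoC, hμ]; ring
  have hc1 : 1 < paretoC α := paretoC_one_lt α hα
  have hcpos : 0 < paretoC α := lt_trans one_pos hc1
  have hbxm : xm ≤ μ + σ := by
    rw [hb]; nlinarith
  have hs1 : 1 < Real.sqrt (α / (α - 2)) := by
    rw [show (1:ℝ) = Real.sqrt 1 by simp]
    apply Real.sqrt_lt_sqrt (by norm_num)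
    rw [lt_div_iff₀ h2]; linarith
  have ha : μ - σ < xm := by
    have hexp : μ - σ = xm * ((α - Real.sqrt (α / (α - 2))) / (α - 1)) := by
      rw [hσ, paretoC_sqrt α hα, hμ]; ring
    rw [hexp]
    have : (α - Real.sqrt (α / (α - 2))) / (α - 1) < 1 := by
      rw [div_lt_one h1]; linarith
    exact mul_lt_of_lt_one_right hxm this
  have h0m : (P α) (Iio (μ - σ)) = 0 :=
    measure_mono_null Iio_subset_Iic_self (hcdf0 α hα _ ha)
  have hmeas : (P α) (Icc (μ - σ) (μ + σ)) = (P α) (Iic (μ + σ)) := by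
    rw [show Icc (μ - σ) (μ + σ) = Iic (μ + σ) \ Iio (μ - σ) by
      ext x; simp only [mem_Icc, mem_diff, mem_Iic, mem_Iio, not_lt]; tauto,
      measure_diff_null h0m]
  have hrpow : (xm / (μ + σ)) ^ α = Real.exp (-(α * Real.log (paretoC α))) := by
    rw [hb, div_mul_cancel_left₀ hxm.ne' (paretoC α),
      Real.inv_rpow hcpos.le, Real.rpow_def_of_pos hcpos, ← Real.exp_neg]
    ring_nf
  rw [hset, hmeas, hcdf α hα _ hbxm, hrpow]

theorem pareto_variation_limit (xm : ℝ) (hxm : 0 < xm)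
    (P : ℝ → Measure ℝ)
    (hprob : ∀ α : ℝ, 2 < α → IsProbabilityMeasure (P α))
    (hcdf : ∀ α : ℝ, 2 < α → ∀ x : ℝ, xm ≤ x → ((P α) (Set.Iic x)).toReal = 1 - (xm / x) ^ α)
    (hcdf0 : ∀ α : ℝ, 2 < α → ∀ x : ℝ, x < xm → (P α) (Set.Iic x) = 0) :
    Tendsto (fun α : ℝ => ((P α) {x : ℝ | |x - α * xm / (α - 1)| ≤
        Real.sqrt (α * xm ^ 2 / ((α - 1) ^ 2 * (α - 2)))}).toReal)
      atTop (nhds (1 - Real.exp (-2)))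
    ∧ (∀ α : ℝ, 2 < α →
        1 - Real.exp (-2) < ((P α) {x : ℝ | |x - α * xm / (α - 1)| ≤
          Real.sqrt (α * xm ^ 2 / ((α - 1) ^ 2 * (α - 2)))}).toReal)
    ∧ (0.6827 : ℝ) < 1 - Real.exp (-2) := by
  refine ⟨?_, ?_, ?_⟩
  · have base : Tendsto (fun α : ℝ => 1 - Real.exp (-(α * Real.log (paretoC α))))
        atTop (nhds (1 - Real.exp (-2))) := by
      have hexp := (Real.continuous_exp.tendsto (-2)).comp L_tendsto.neg
      exact tendsto_const_nhds.sub hexp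
    refine Tendsto.congr' ?_ base
    filter_upwards [eventually_gt_atTop (2:ℝ)] with α hα
    exact (pareto_measure xm hxm P hcdf hcdf0 α hα).symm
  · intro α hα
    rw [pareto_measure xm hxm P hcdf hcdf0 α hα]
    have h := key_lower α hα
    have hlt : Real.exp (-(α * Real.log (paretoC α))) < Real.exp (-2) :=
      Real.exp_lt_exp.mpr (by linarith)
    linarith
  · have h1 : (2.7182818283:ℝ) < Real.exp 1 := Real.exp_one_gt_d9
    have h2 : Real.exp (-2) = (Real.exp 1 * Real.exp 1)⁻¹ := by
      rw [← Real.exp_add, ← Real.exp_neg]; norm_num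
    rw [h2]
    have h3 := Real.exp_pos 1
    have h4 : (Real.exp 1 * Real.exp 1)⁻¹ * (Real.exp 1 * Real.exp 1) = 1 :=
      inv_mul_cancel₀ (by positivity)
    have h5 : (7.389:ℝ) < Real.exp 1 * Real.exp 1 := by nlinarith
    have h6 : (0:ℝ) < (Real.exp 1 * Real.exp 1)⁻¹ := by positivity
    nlinarith
end

section
/- If X is a Weibull random variable with scale λ > 0 and shape k ∈ (0, 1], then P(|X - E[X]| ≤ √Var(X)) ≥ 1 - exp(-√2) > 0.6827. -/
open Real MeasureTheory Set

lemma gamma_three : Real.Gamma 3 = 2 := by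
  have := Real.Gamma_nat_eq_factorial 2
  norm_num at this
  convert this using 2
  norm_num

lemma log_gamma_ge (t : ℝ) (ht : 2 ≤ t) :
    (t - 1) * Real.log 2 ≤ Real.log (Real.Gamma (1 + t)) := by
  have h1 : (0:ℝ) < t - 1 := by linarith
  have ha : (0:ℝ) ≤ (t - 2) / (t - 1) := by apply div_nonneg <;> linarith
  have hb : (0:ℝ) ≤ 1 / (t - 1) := by positivity
  have hab : (t - 2) / (t - 1) + 1 / (t - 1) = 1 := by field_simp; ring
  have hmem2 : (2:ℝ) ∈ Set.Ioi (0:ℝ) := by norm_num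
  have hmemt : (1 + t) ∈ Set.Ioi (0:ℝ) := by simp; linarith
  have hc := Real.convexOn_log_Gamma.2 hmem2 hmemt ha hb hab
  simp only [smul_eq_mul, Function.comp_apply] at hc
  have hcomb : (t - 2) / (t - 1) * (2:ℝ) + 1 / (t - 1) * (1 + t) = 3 := by
    field_simp; ring
  rw [hcomb, Real.Gamma_two, Real.log_one, mul_zero, gamma_three, zero_add] at hc
  -- hc : log 2 ≤ 1/(t-1) * log (Gamma (1+t))
  rw [div_mul_eq_mul_div, le_div_iff₀ h1, one_mul] at hc
  linarith

lemma gamma_ge (t : ℝ) (ht : 2 ≤ t) : (2:ℝ) ^ (t - 1) ≤ Real.Gamma (1 + t) := by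
  have hpos : 0 < Real.Gamma (1 + t) := Real.Gamma_pos_of_pos (by linarith)
  have := log_gamma_ge t ht
  calc (2:ℝ) ^ (t - 1) = Real.exp (Real.log 2 * (t - 1)) := Real.rpow_def_of_pos two_pos _
    _ ≤ Real.exp (Real.log (Real.Gamma (1 + t))) := by
        apply Real.exp_le_exp.2; linarith
    _ = Real.Gamma (1 + t) := Real.exp_log hpos

lemma gamma_sq (s : ℝ) (hs : 1 ≤ s) :
    2 * Real.Gamma (1 + s) ^ 2 ≤ Real.Gamma (1 + 2 * s) := by
  have h1 : (0:ℝ) < 2 * s - 1 := by linarith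
  have ha : (0:ℝ) ≤ s / (2 * s - 1) := by positivity
  have hb : (0:ℝ) ≤ (s - 1) / (2 * s - 1) := by apply div_nonneg <;> linarith
  have hab : s / (2 * s - 1) + (s - 1) / (2 * s - 1) = 1 := by
    rw [← add_div, div_eq_one_iff_eq h1.ne']; ring
  have hmem2 : (2:ℝ) ∈ Set.Ioi (0:ℝ) := by norm_num
  have hmemt : (1 + 2 * s) ∈ Set.Ioi (0:ℝ) := by simp; linarith
  have hc := Real.convexOn_log_Gamma.2 hmem2 hmemt ha hb hab
  simp only [smul_eq_mul, Function.comp_apply] at hc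
  have hcomb : s / (2 * s - 1) * (2:ℝ) + (s - 1) / (2 * s - 1) * (1 + 2 * s) = 1 + s := by
    rw [div_mul_eq_mul_div, div_mul_eq_mul_div, ← add_div, div_eq_iff h1.ne']; ring
  rw [hcomb, Real.Gamma_two, Real.log_one, mul_zero, zero_add] at hc
  -- hc : log Γ(1+s) ≤ (s-1)/(2s-1) * log Γ(1+2s)
  have hL := log_gamma_ge (2 * s) (by linarith)
  set L := Real.log (Real.Gamma (1 + 2 * s)) with hLdef
  have hlog2 : (0:ℝ) < Real.log 2 := Real.log_pos (by norm_num)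
  have key : 2 * Real.log (Real.Gamma (1 + s)) ≤ L - Real.log 2 := by
    have h2 : (s - 1) / (2 * s - 1) * L ≤ (L - Real.log 2) / 2 := by
      rw [div_mul_eq_mul_div, div_le_div_iff₀ h1 two_pos]
      nlinarith
    linarith
  have hp1 : 0 < Real.Gamma (1 + s) := Real.Gamma_pos_of_pos (by linarith)
  have hp2 : 0 < Real.Gamma (1 + 2 * s) := Real.Gamma_pos_of_pos (by linarith)
  have h3 := Real.exp_le_exp.2 key
  rw [Real.exp_sub, hLdef, Real.exp_log hp2] at h3
  have h2 : Real.exp (2 * Real.log (Real.Gamma (1 + s))) = Real.Gamma (1 + s) ^ 2 := by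
    rw [mul_comm, Real.exp_mul, Real.exp_log hp1]
    norm_num
  rw [h2, Real.exp_log (by norm_num : (0:ℝ) < 2)] at h3
  calc 2 * Real.Gamma (1 + s) ^ 2 ≤ 2 * (Real.Gamma (1 + 2 * s) / 2) := by linarith
    _ = Real.Gamma (1 + 2 * s) := by ring

theorem weibull_variation_comparison (lam k : ℝ) (hlam : 0 < lam) (hk0 : 0 < k) (hk1 : k ≤ 1)
    (P : Measure ℝ) [IsProbabilityMeasure P]
    (hcdf : ∀ x : ℝ, 0 ≤ x → (P (Set.Iic x)).toReal = 1 - Real.exp (-(x / lam) ^ k))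
    (hcdf0 : ∀ x : ℝ, x < 0 → P (Set.Iic x) = 0) :
    1 - Real.exp (-Real.sqrt 2) ≤
      (P {x : ℝ | |x - lam * Real.Gamma (1 + 1 / k)| ≤
        Real.sqrt (lam ^ 2 * (Real.Gamma (1 + 2 / k) - (Real.Gamma (1 + 1 / k)) ^ 2))}).toReal
    ∧ (0.6827 : ℝ) < 1 - Real.exp (-Real.sqrt 2) := by
  have hs : (1:ℝ) ≤ 1 / k := by rw [le_div_iff₀ hk0]; linarith
  set G1 := Real.Gamma (1 + 1 / k) with hG1def
  set G2 := Real.Gamma (1 + 2 / k) with hG2def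
  have hG1pos : 0 < G1 := Real.Gamma_pos_of_pos (by positivity)
  have hG2sq : 2 * G1 ^ 2 ≤ G2 := by
    have := gamma_sq (1 / k) hs
    rwa [show 1 + 2 * (1 / k) = 1 + 2 / k by ring] at this
  set w := G2 - G1 ^ 2 with hwdef
  have hwnn : 0 ≤ w := by nlinarith
  set μ := lam * G1 with hμdef
  set σ := Real.sqrt (lam ^ 2 * w) with hσdef
  have hμpos : 0 < μ := by positivity
  have hσeq : σ = lam * Real.sqrt w := by
    rw [hσdef, Real.sqrt_mul (sq_nonneg lam) w, Real.sqrt_sq hlam.le]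
  have hσnn : 0 ≤ σ := Real.sqrt_nonneg _
  have hμσ : μ ≤ σ := by
    rw [hσdef, Real.le_sqrt hμpos.le (by positivity)]
    nlinarith
  -- measure of negative reals is zero
  have hIio0 : P (Set.Iio (0:ℝ)) = 0 := by
    have hsub : Set.Iio (0:ℝ) ⊆ ⋃ n : ℕ, Set.Iic (-(1 / ((n:ℝ) + 1))) := by
      intro x hx
      obtain ⟨n, hn⟩ := exists_nat_one_div_lt (show (0:ℝ) < -x by simpa using hx)
      exact Set.mem_iUnion.2 ⟨n, by simp only [Set.mem_Iic]; linarith⟩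
    refine measure_mono_null hsub (measure_iUnion_null fun n => hcdf0 _ ?_)
    have : (0:ℝ) < 1 / ((n:ℝ) + 1) := by positivity
    linarith
  have hIio : P (Set.Iio (μ - σ)) = 0 :=
    measure_mono_null (Set.Iio_subset_Iio (by linarith)) hIio0
  set E := {x : ℝ | |x - μ| ≤ σ} with hEdef
  have hsub2 : Set.Iic (μ + σ) ⊆ Set.Iio (μ - σ) ∪ E := by
    intro x hx
    simp only [Set.mem_Iic] at hx
    by_cases h : x < μ - σ
    · exact Or.inl h
    · push_neg at h
      right
      rw [hEdef]
      simp only [Set.mem_setOf_eq, abs_le]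
      constructor <;> linarith
  have hle : P (Set.Iic (μ + σ)) ≤ P E := by
    calc P (Set.Iic (μ + σ)) ≤ P (Set.Iio (μ - σ) ∪ E) := measure_mono hsub2
      _ ≤ P (Set.Iio (μ - σ)) + P E := measure_union_le _ _
      _ = P E := by rw [hIio, zero_add]
  have htoReal : (P (Set.Iic (μ + σ))).toReal ≤ (P E).toReal :=
    ENNReal.toReal_mono (measure_ne_top P E) hle
  rw [hcdf (μ + σ) (by linarith)] at htoReal
  -- key exponent bound
  have hcge : Real.sqrt 2 ≤ ((μ + σ) / lam) ^ k := by
    set c := (μ + σ) / lam with hcdefc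
    have hceq : c = G1 + Real.sqrt w := by
      rw [hcdefc, hμdef, hσeq]; field_simp
    have hcnn : 0 ≤ c := by rw [hceq]; positivity
    have hG2ge : (2:ℝ) ^ ((1:ℝ) / k) ≤ G2 := by
      have h1 := gamma_ge (2 / k) (by rw [le_div_iff₀ hk0]; linarith)
      have h2 : (2:ℝ) ^ ((1:ℝ) / k) ≤ (2:ℝ) ^ (2 / k - 1) :=
        Real.rpow_le_rpow_of_exponent_le one_le_two (by
          rw [div_sub' (ne_of_gt hk0), div_le_div_iff₀ hk0 hk0]
          nlinarith)
      exact h2.trans h1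
    have hc2 : (2:ℝ) ^ ((1:ℝ) / k) ≤ c ^ 2 := by
      have hsq : Real.sqrt w ^ 2 = w := Real.sq_sqrt hwnn
      have : G2 ≤ c ^ 2 := by
        rw [hceq]
        nlinarith [Real.sqrt_nonneg w, hG1pos]
      linarith
    have hcge2 : (2:ℝ) ^ ((1:ℝ) / (2 * k)) ≤ c := by
      have h1 : Real.sqrt ((2:ℝ) ^ ((1:ℝ) / k)) ≤ Real.sqrt (c ^ 2) :=
        Real.sqrt_le_sqrt hc2
      rw [Real.sqrt_sq hcnn] at h1
      have h2 : Real.sqrt ((2:ℝ) ^ ((1:ℝ) / k)) = (2:ℝ) ^ ((1:ℝ) / (2 * k)) := by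
        rw [Real.sqrt_eq_rpow, ← Real.rpow_mul (by norm_num)]
        congr 1
        field_simp
      rwa [h2] at h1
    calc Real.sqrt 2 = (2:ℝ) ^ ((1:ℝ) / 2) := by rw [Real.sqrt_eq_rpow]
      _ = ((2:ℝ) ^ ((1:ℝ) / (2 * k))) ^ k := by
          rw [← Real.rpow_mul (by norm_num)]
          congr 1
          field_simp
      _ ≤ c ^ k := Real.rpow_le_rpow (Real.rpow_nonneg (by norm_num) _) hcge2 hk0.le
  have hexp : Real.exp (-((μ + σ) / lam) ^ k) ≤ Real.exp (-Real.sqrt 2) :=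
    Real.exp_le_exp.2 (by linarith)
  constructor
  · linarith
  · -- numeric bound
    have h14 : (1.4:ℝ) ≤ Real.sqrt 2 := by
      rw [show (1.4:ℝ) = Real.sqrt (1.96) by
        rw [show (1.96:ℝ) = 1.4 ^ 2 by norm_num, Real.sqrt_sq (by norm_num)]]
      exact Real.sqrt_le_sqrt (by norm_num)
    have hE : (3.32:ℝ) ≤ Real.exp 1.4 := by
      have h35 : (1.35:ℝ) ≤ Real.exp 0.35 := by
        have := Real.add_one_le_exp (0.35:ℝ)
        linarith
      have h4 : (1.35:ℝ) ^ 4 ≤ Real.exp 0.35 ^ 4 :=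
        pow_le_pow_left₀ (by norm_num) h35 4
      have : Real.exp 0.35 ^ 4 = Real.exp 1.4 := by
        rw [← Real.exp_nat_mul]
        norm_num
      nlinarith
    have hexp2 : Real.exp (-Real.sqrt 2) ≤ Real.exp (-(1.4:ℝ)) :=
      Real.exp_le_exp.2 (by linarith)
    have : Real.exp (-(1.4:ℝ)) < 0.3173 := by
      rw [Real.exp_neg]
      rw [inv_lt_iff_one_lt_mul₀ (Real.exp_pos _)]
      nlinarith [Real.exp_pos (1.4:ℝ)]
    linarith
end

section
/- For a log-normal random variable X with parameters μ ∈ ℝ and σ ≥ √(ln 2), P(|X - E[X]| ≤ √Var(X)) = Φ((σ²/2 + ln(1 + √(exp(σ²) - 1)))/σ), where Φ is the standard normal CDF. -/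
/-!
Write `m = exp (μ + σ²/2)` and `v = √(exp σ² - 1)`, so that the standard deviation of `X` is
`v m`. The hypothesis `σ ≥ √(log 2)` means `v ≥ 1`, so the lower half `m - v m ≤ X` of the event
is automatic (`X > 0`) and the event is `X ≤ m (1 + v)`, i.e. `Z ≤ (σ²/2 + log (1 + v)) / σ`.
-/

open Real MeasureTheory ProbabilityTheory Set

/-- The standard normal cumulative distribution function. -/
noncomputable def stdNormalCDF (x : ℝ) : ℝ :=
  ((gaussianReal 0 1) (Set.Iic x)).toReal

lemma abs_sub_le_iff_le_add_of_sub_le {x c r : ℝ} (h : c - r ≤ x) :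
    |x - c| ≤ r ↔ x ≤ c + r := by
  rw [abs_sub_le_iff]
  constructor
  · rintro ⟨hle, -⟩
    linarith
  · intro hle
    constructor <;> linarith

lemma preimage_exp_affine_setOf_abs_sub_le {μ σ c r : ℝ} (hσ : 0 < σ) (hc : 0 < c)
    (hcr : c ≤ r) :
    (fun z : ℝ => exp (μ + σ * z)) ⁻¹' {x | |x - c| ≤ r} = Iic ((log (c + r) - μ) / σ) := by
  ext z
  have hlow : c - r ≤ exp (μ + σ * z) := by linarith [exp_pos (μ + σ * z)]
  rw [mem_preimage, mem_ofPred_eq, abs_sub_le_iff_le_add_of_sub_le hlow,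
    ← le_log_iff_exp_le (by linarith), mem_Iic, le_div_iff₀ hσ]
  constructor <;> intro h <;> linarith

lemma map_exp_affine_apply_setOf_abs_sub_le (P : Measure ℝ) {μ σ c r : ℝ} (hσ : 0 < σ)
    (hc : 0 < c) (hcr : c ≤ r) :
    P.map (fun z : ℝ => exp (μ + σ * z)) {x | |x - c| ≤ r} =
      P (Iic ((log (c + r) - μ) / σ)) := by
  rw [Measure.map_apply (by fun_prop) (measurableSet_le (by fun_prop) measurable_const),
    preimage_exp_affine_setOf_abs_sub_le hσ hc hcr]

lemma sqrt_lognormal_variance (μ σ : ℝ) :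
    √((exp (σ ^ 2) - 1) * exp (2 * μ + σ ^ 2)) =
      √(exp (σ ^ 2) - 1) * exp (μ + σ ^ 2 / 2) := by
  have hsq : exp (2 * μ + σ ^ 2) = exp (μ + σ ^ 2 / 2) ^ 2 := by
    rw [← exp_nat_mul]
    ring_nf
  rw [sqrt_mul' _ (exp_pos _).le, hsq, sqrt_sq (exp_pos _).le]

lemma one_le_sqrt_exp_sq_sub_one {σ : ℝ} (hσ : √(log 2) ≤ σ) : 1 ≤ √(exp (σ ^ 2) - 1) := by
  have hlog : log 2 ≤ σ ^ 2 :=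
    (sqrt_le_left (by linarith [sqrt_nonneg (log 2)])).mp hσ
  have htwo : 2 ≤ exp (σ ^ 2) := by
    simpa [exp_log two_pos] using exp_le_exp.mpr hlog
  rw [one_le_sqrt]
  linarith

theorem lognormal_probability_formula (μ σ : ℝ) (hσ : Real.sqrt (Real.log 2) ≤ σ) :
    ((Measure.map (fun z : ℝ => Real.exp (μ + σ * z)) (gaussianReal 0 1))
      {x : ℝ | |x - Real.exp (μ + σ ^ 2 / 2)| ≤
        Real.sqrt ((Real.exp (σ ^ 2) - 1) * Real.exp (2 * μ + σ ^ 2))}).toReal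
    = stdNormalCDF ((σ ^ 2 / 2 + Real.log (1 + Real.sqrt (Real.exp (σ ^ 2) - 1))) / σ) := by
  have hσ0 : 0 < σ := (sqrt_pos.mpr (log_pos one_lt_two)).trans_le hσ
  set m := exp (μ + σ ^ 2 / 2)
  set v := √(exp (σ ^ 2) - 1)
  have hv : 1 ≤ v := one_le_sqrt_exp_sq_sub_one hσ
  have hm : 0 < m := exp_pos _
  have hlog : log (m + v * m) - μ = σ ^ 2 / 2 + log (1 + v) := by
    rw [show m + v * m = m * (1 + v) by ring, log_mul hm.ne' (by positivity), log_exp]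
    ring
  rw [sqrt_lognormal_variance, map_exp_affine_apply_setOf_abs_sub_le _ hσ0 hm
    (le_mul_of_one_le_left hm.le hv), hlog]
  rfl
end

section
/- The function y ↦ ln(√(1+y²)·(1+y))/√(ln(1+y²)) is strictly increasing on (0, ∞). -/
open Real Set

private lemma logA {x : ℝ} (hx : 0 < x) : 2 * x / (2 + x) < Real.log (1 + x) := by
  set g : ℝ → ℝ := fun t => Real.log (1 + t) - 2 * t / (2 + t) with hg
  have hmono : StrictMonoOn g (Set.Ici 0) := by
    apply strictMonoOn_of_deriv_pos (convex_Ici 0)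
    · apply ContinuousOn.sub
      · apply ContinuousOn.log (by fun_prop)
        intro t ht
        have : (0:ℝ) ≤ t := ht
        positivity
      · apply ContinuousOn.div (by fun_prop) (by fun_prop)
        intro t ht
        have : (0:ℝ) ≤ t := ht
        positivity
    · intro t ht
      rw [interior_Ici] at ht
      have ht' : (0:ℝ) < t := ht
      have h1 : (0:ℝ) < 1 + t := by linarith
      have h2 : (0:ℝ) < 2 + t := by linarith
      have hlog : HasDerivAt (fun s : ℝ => Real.log (1 + s)) (1 / (1 + t)) t := by
        simpa using ((hasDerivAt_id t).const_add 1).log (ne_of_gt h1)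
      have hdiv : HasDerivAt (fun s : ℝ => 2 * s / (2 + s))
          ((2 * 1 * (2 + t) - 2 * t * 1) / (2 + t) ^ 2) t := by
        exact
          ((hasDerivAt_id t).const_mul 2).div ((hasDerivAt_id t).const_add 2) (ne_of_gt h2)
      rw [(show HasDerivAt g _ t from hlog.sub hdiv).deriv]
      have : 1 / (1 + t) - (2 * 1 * (2 + t) - 2 * t * 1) / (2 + t) ^ 2
          = t ^ 2 / ((1 + t) * (2 + t) ^ 2) := by
        field_simp
        ring
      rw [this]
      positivity
  have := hmono (Set.mem_Ici.mpr (le_refl (0:ℝ))) (Set.mem_Ici.mpr (le_of_lt hx)) hx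
  simp only [hg] at this
  simpa using this

private lemma logB {x : ℝ} (hx : 0 < x) :
    Real.log (1 + x) < x * (2 + x) / (2 * (1 + x)) := by
  set g : ℝ → ℝ := fun t => t * (2 + t) / (2 * (1 + t)) - Real.log (1 + t) with hg
  have hmono : StrictMonoOn g (Set.Ici 0) := by
    apply strictMonoOn_of_deriv_pos (convex_Ici 0)
    · apply ContinuousOn.sub
      · apply ContinuousOn.div (by fun_prop) (by fun_prop)
        intro t ht
        have : (0:ℝ) ≤ t := ht
        positivity
      · apply ContinuousOn.log (by fun_prop)
        intro t ht
        have : (0:ℝ) ≤ t := ht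
        positivity
    · intro t ht
      rw [interior_Ici] at ht
      have ht' : (0:ℝ) < t := ht
      have h1 : (0:ℝ) < 1 + t := by linarith
      have hlog : HasDerivAt (fun s : ℝ => Real.log (1 + s)) (1 / (1 + t)) t := by
        simpa using ((hasDerivAt_id t).const_add 1).log (ne_of_gt h1)
      have hnum : HasDerivAt (fun s : ℝ => s * (2 + s)) (1 * (2 + t) + t * 1) t :=
        (hasDerivAt_id t).mul ((hasDerivAt_id t).const_add 2)
      have hden : HasDerivAt (fun s : ℝ => 2 * (1 + s)) 2 t := by
        simpa using ((hasDerivAt_id t).const_add 1).const_mul 2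
      have hdiv : HasDerivAt (fun s : ℝ => s * (2 + s) / (2 * (1 + s)))
          (((1 * (2 + t) + t * 1) * (2 * (1 + t)) - t * (2 + t) * 2) / (2 * (1 + t)) ^ 2) t :=
        hnum.div hden (by positivity)
      rw [(show HasDerivAt g _ t from hdiv.sub hlog).deriv]
      have : ((1 * (2 + t) + t * 1) * (2 * (1 + t)) - t * (2 + t) * 2) / (2 * (1 + t)) ^ 2
          - 1 / (1 + t) = t ^ 2 / (2 * (1 + t) ^ 2) := by
        field_simp
        ring
      rw [this]
      positivity
  have := hmono (Set.mem_Ici.mpr (le_refl (0:ℝ))) (Set.mem_Ici.mpr (le_of_lt hx)) hx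
  simp only [hg] at this
  simpa using this

private lemma keyIneq {y : ℝ} (hy : 0 < y) :
    2 * y * (1 + y) * Real.log (1 + y) < (2 + y + 3 * y ^ 2) * Real.log (1 + y ^ 2) := by
  set u := Real.log (1 + y ^ 2) with hu
  set v := Real.log (1 + y) with hv
  rcases le_or_gt y 1 with hy1 | hy1
  · have hA : 2 * y ^ 2 < (2 + y ^ 2) * u := by
      have := logA (show (0:ℝ) < y ^ 2 by positivity)
      rw [div_lt_iff₀ (by positivity)] at this
      nlinarith [this]
    have hB : 2 * (1 + y) * v < y * (2 + y) := by
      have := logB hy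
      rw [lt_div_iff₀ (by positivity)] at this
      nlinarith [this]
    have c1 : 2 * y * (1 + y) * v * (2 + y ^ 2) < y ^ 2 * (2 + y) * (2 + y ^ 2) := by
      nlinarith [mul_lt_mul_of_pos_left hB (show (0:ℝ) < y * (2 + y ^ 2) by positivity)]
    have c2 : y ^ 2 * (2 + y) * (2 + y ^ 2) ≤ 2 * y ^ 2 * (2 + y + 3 * y ^ 2) := by
      nlinarith [pow_pos hy 4, sq_nonneg y]
    have c3 : 2 * y ^ 2 * (2 + y + 3 * y ^ 2) < (2 + y + 3 * y ^ 2) * u * (2 + y ^ 2) := by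
      nlinarith [mul_lt_mul_of_pos_left hA (show (0:ℝ) < 2 + y + 3 * y ^ 2 by positivity)]
    exact lt_of_mul_lt_mul_right
      (show 2 * y * (1 + y) * v * (2 + y ^ 2) < (2 + y + 3 * y ^ 2) * u * (2 + y ^ 2) by linarith)
      (by positivity)
  · have hv0 : 0 < v := Real.log_pos (by linarith)
    have hlog : v ≤ u := Real.log_le_log (by positivity) (by nlinarith)
    nlinarith [mul_le_mul_of_nonneg_left hlog (show (0:ℝ) ≤ 2 + y + 3 * y ^ 2 by positivity),
      mul_lt_mul_of_pos_right (show 2 * y * (1 + y) < 2 + y + 3 * y ^ 2 by nlinarith) hv0]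

theorem lognormal_upper_strictMono :
    StrictMonoOn
      (fun y : ℝ => Real.log (Real.sqrt (1 + y ^ 2) * (1 + y)) / Real.sqrt (Real.log (1 + y ^ 2)))
      (Set.Ioi (0 : ℝ)) := by
  have hF : StrictMonoOn
      (fun y : ℝ => ((1/2) * Real.log (1 + y ^ 2) + Real.log (1 + y)) /
        Real.sqrt (Real.log (1 + y ^ 2))) (Set.Ioi 0) := by
    apply strictMonoOn_of_deriv_pos (convex_Ioi 0)
    · apply ContinuousOn.div
      · apply ContinuousOn.add
        · apply ContinuousOn.mul continuousOn_const
          apply ContinuousOn.log (by fun_prop)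
          intro t ht
          have : (0:ℝ) < t := ht
          positivity
        · apply ContinuousOn.log (by fun_prop)
          intro t ht
          have : (0:ℝ) < t := ht
          positivity
      · apply ContinuousOn.sqrt
        apply ContinuousOn.log (by fun_prop)
        intro t ht
        have : (0:ℝ) < t := ht
        positivity
      · intro t ht
        have ht' : (0:ℝ) < t := ht
        have : 0 < Real.log (1 + t ^ 2) := Real.log_pos (by nlinarith)
        exact ne_of_gt (Real.sqrt_pos.mpr this)
    · intro x hx
      rw [interior_Ioi] at hx
      have hx' : (0:ℝ) < x := hx
      have h1x2 : (0:ℝ) < 1 + x ^ 2 := by positivity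
      have h1x : (0:ℝ) < 1 + x := by linarith
      have hupos : 0 < Real.log (1 + x ^ 2) := Real.log_pos (by nlinarith)
      have hs : 0 < Real.sqrt (Real.log (1 + x ^ 2)) := Real.sqrt_pos.mpr hupos
      have hA : HasDerivAt (fun y : ℝ => 1 + y ^ 2) (2 * x) x := by
        simpa using ((hasDerivAt_pow 2 x).const_add 1)
      have hu' : HasDerivAt (fun y : ℝ => Real.log (1 + y ^ 2)) (2 * x / (1 + x ^ 2)) x :=
        hA.log (ne_of_gt h1x2)
      have hN : HasDerivAt (fun y : ℝ => (1/2) * Real.log (1 + y ^ 2) + Real.log (1 + y))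
          ((1/2) * (2 * x / (1 + x ^ 2)) + 1 / (1 + x)) x := by
        apply (hu'.const_mul (1/2)).add
        simpa using ((hasDerivAt_id x).const_add 1).log (ne_of_gt h1x)
      have hD : HasDerivAt (fun y : ℝ => Real.sqrt (Real.log (1 + y ^ 2)))
          ((2 * x / (1 + x ^ 2)) / (2 * Real.sqrt (Real.log (1 + x ^ 2)))) x :=
        hu'.sqrt (ne_of_gt hupos)
      rw [(show HasDerivAt (fun y : ℝ => ((1/2) * Real.log (1 + y ^ 2) + Real.log (1 + y)) /
          Real.sqrt (Real.log (1 + y ^ 2))) _ x from hN.div hD (ne_of_gt hs)).deriv]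
      apply div_pos _ (by positivity)
      rw [sub_pos]
      set u := Real.log (1 + x ^ 2) with hudef
      set v := Real.log (1 + x) with hvdef
      set s := Real.sqrt u with hsdef
      have hss : s * s = u := Real.mul_self_sqrt hupos.le
      have hK := keyIneq hx'
      rw [show ((1/2) * u + v) * ((2 * x / (1 + x ^ 2)) / (2 * s))
          = (((1/2) * u + v) * (2 * x / (1 + x ^ 2))) / (2 * s) from by ring,
        div_lt_iff₀ (by positivity)]
      rw [show ((1/2) * (2 * x / (1 + x ^ 2)) + 1 / (1 + x)) * s * (2 * s)
          = ((1/2) * (2 * x / (1 + x ^ 2)) + 1 / (1 + x)) * 2 * (s * s) from by ring, hss]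
      rw [show ((1/2) * u + v) * (2 * x / (1 + x ^ 2))
            = ((u + 2 * v) * x * (1 + x)) / ((1 + x ^ 2) * (1 + x)) from by
          field_simp,
        show ((1/2) * (2 * x / (1 + x ^ 2)) + 1 / (1 + x)) * 2 * u
            = (2 * u * (x * (1 + x) + (1 + x ^ 2))) / ((1 + x ^ 2) * (1 + x)) from by
          field_simp,
        div_lt_div_iff₀ (by positivity) (by positivity)]
      nlinarith [hK, mul_pos h1x2 h1x]
  apply hF.congr
  intro y hy
  have hy' : (0:ℝ) < y := hy
  have h1 : (0:ℝ) < 1 + y ^ 2 := by positivity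
  have h2 : (0:ℝ) < 1 + y := by linarith
  simp only
  rw [Real.log_mul (ne_of_gt (Real.sqrt_pos.mpr h1)) (ne_of_gt h2),
    Real.log_sqrt h1.le]
  ring_nf
end

section
/- The function y ↦ ln(√(1+y²)·(1-y))/√(ln(1+y²)) is strictly decreasing on (0, 1). -/
open Real Set

/-- Lower bound for `log`: `t/(1+t) ≤ log (1+t)` in cleared form. -/
lemma aux_log_lb {t : ℝ} (ht : 0 < t) : t ≤ Real.log (1 + t) * (1 + t) := by
  have h1t : (0:ℝ) < 1 + t := by linarith
  have h := Real.log_le_sub_one_of_pos (x := (1 + t)⁻¹) (by positivity)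
  rw [Real.log_inv] at h
  have h2 : (1 + t)⁻¹ * (1 + t) = 1 := inv_mul_cancel₀ (ne_of_gt h1t)
  nlinarith [mul_le_mul_of_nonneg_right h (le_of_lt h1t)]

/-- Upper bound (trapezoid / sinh): `-log(1-x) ≤ x(2-x)/(2(1-x))` in cleared form. -/
lemma aux_log_one_sub {x : ℝ} (h0 : 0 < x) (h1 : x < 1) :
    -(x * (2 - x)) ≤ 2 * (1 - x) * Real.log (1 - x) := by
  have hx1 : (0:ℝ) < 1 - x := by linarith
  set s := Real.log (1 - x)⁻¹ with hs
  have hspos : 0 ≤ s := Real.log_nonneg (by rw [le_inv_comm₀] <;> nlinarith)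
  have hsinh : s ≤ Real.sinh s := Real.self_le_sinh_iff.mpr hspos
  rw [Real.sinh_eq, Real.exp_log (by positivity), ← Real.log_inv, inv_inv,
    Real.exp_log hx1] at hsinh
  have hlog : Real.log (1 - x) = -s := by rw [hs, Real.log_inv, neg_neg]
  rw [hlog]
  have h2 : s * (2 * (1 - x)) ≤ ((1 - x)⁻¹ - (1 - x)) / 2 * (2 * (1 - x)) :=
    mul_le_mul_of_nonneg_right hsinh (by positivity)
  have h3 : (1 - x)⁻¹ * (1 - x) = 1 := inv_mul_cancel₀ (ne_of_gt hx1)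
  nlinarith

theorem lognormal_lower_strictAnti :
    StrictAntiOn
      (fun y : ℝ => Real.log (Real.sqrt (1 + y ^ 2) * (1 - y)) / Real.sqrt (Real.log (1 + y ^ 2)))
      (Set.Ioo (0 : ℝ) 1) := by
  set g : ℝ → ℝ := fun y =>
    (Real.log (1 + y ^ 2) / 2 + Real.log (1 - y)) / Real.sqrt (Real.log (1 + y ^ 2)) with hg
  -- derivative of g at each point of (0,1)
  have hderiv : ∀ x ∈ Set.Ioo (0:ℝ) 1, HasDerivAt g
      (((x / (1 + x ^ 2) - 1 / (1 - x)) * Real.sqrt (Real.log (1 + x ^ 2)) -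
        (Real.log (1 + x ^ 2) / 2 + Real.log (1 - x)) *
          (2 * x / (2 * Real.sqrt (Real.log (1 + x ^ 2))) / (1 + x ^ 2))) /
        Real.sqrt (Real.log (1 + x ^ 2)) ^ 2) x := by
    rintro x ⟨h0, h1⟩
    have hx2 : (0:ℝ) < 1 + x ^ 2 := by positivity
    have hx1 : (0:ℝ) < 1 - x := by linarith
    have hu : (0:ℝ) < Real.log (1 + x ^ 2) := by
      apply Real.log_pos; nlinarith
    have hinner : HasDerivAt (fun y : ℝ => 1 + y ^ 2) (2 * x) x := by
      simpa using ((hasDerivAt_pow 2 x).const_add 1)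
    have hlog1 : HasDerivAt (fun y : ℝ => Real.log (1 + y ^ 2)) (2 * x / (1 + x ^ 2)) x :=
      hinner.log (ne_of_gt hx2)
    have hlin : HasDerivAt (fun y : ℝ => 1 - y) (-1) x := by
      simpa using ((hasDerivAt_id x).const_sub 1)
    have hlog2 : HasDerivAt (fun y : ℝ => Real.log (1 - y)) (-1 / (1 - x)) x :=
      hlin.log (ne_of_gt hx1)
    have hN : HasDerivAt (fun y : ℝ => Real.log (1 + y ^ 2) / 2 + Real.log (1 - y))
        (x / (1 + x ^ 2) - 1 / (1 - x)) x := by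
      have := (hlog1.div_const 2).add hlog2
      exact this.congr_deriv (by ring)
    have hD : HasDerivAt (fun y : ℝ => Real.sqrt (Real.log (1 + y ^ 2)))
        (2 * x / (1 + x ^ 2) / (2 * Real.sqrt (Real.log (1 + x ^ 2)))) x :=
      hlog1.sqrt (ne_of_gt hu)
    have hs : (0:ℝ) < Real.sqrt (Real.log (1 + x ^ 2)) := Real.sqrt_pos.mpr hu
    have := hN.div hD (ne_of_gt hs)
    refine this.congr_deriv ?_
    rw [div_div]
    rw [div_div]
    ring_nf
  -- g is strictly antitone
  have hanti : StrictAntiOn g (Set.Ioo (0:ℝ) 1) := by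
    apply strictAntiOn_of_deriv_neg (convex_Ioo 0 1)
    · exact fun x hx => (hderiv x hx).continuousAt.continuousWithinAt
    · rw [interior_Ioo]
      rintro x ⟨h0, h1⟩
      rw [(hderiv x ⟨h0, h1⟩).deriv]
      have hx2 : (0:ℝ) < 1 + x ^ 2 := by positivity
      have hx1 : (0:ℝ) < 1 - x := by linarith
      have hu : (0:ℝ) < Real.log (1 + x ^ 2) := by apply Real.log_pos; nlinarith
      set u := Real.log (1 + x ^ 2) with hu'
      set l := Real.log (1 - x) with hl'
      have hs : (0:ℝ) < Real.sqrt u := Real.sqrt_pos.mpr hu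
      have hssq : Real.sqrt u * Real.sqrt u = u := Real.mul_self_sqrt (le_of_lt hu)
      apply div_neg_of_neg_of_pos _ (by positivity)
      -- numerator < 0
      have hlb : x ^ 2 ≤ u * (1 + x ^ 2) := by
        have := aux_log_lb (t := x ^ 2) (by positivity)
        linarith
      have hub : -(x * (2 - x)) ≤ 2 * (1 - x) * l := aux_log_one_sub h0 h1
      -- key polynomial inequality
      have key : (x / (1 + x ^ 2) - 1 / (1 - x)) * u - (u / 2 + l) * (x / (1 + x ^ 2)) < 0 := by
        rw [show (x / (1 + x ^ 2) - 1 / (1 - x)) * u - (u / 2 + l) * (x / (1 + x ^ 2)) =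
            ((x * (1 - x) - (1 + x ^ 2)) * u * 2 - (u + 2 * l) * (x * (1 - x))) /
              (2 * (1 + x ^ 2) * (1 - x)) by field_simp]
        apply div_neg_of_neg_of_pos _ (by positivity)
        have p1 : (2 * (1 + x ^ 2) - x * (1 - x)) * x ^ 2 ≤
            (2 * (1 + x ^ 2) - x * (1 - x)) * (u * (1 + x ^ 2)) :=
          mul_le_mul_of_nonneg_left hlb (by nlinarith)
        have p2 : (x * (1 + x ^ 2)) * (-(x * (2 - x))) ≤
            (x * (1 + x ^ 2)) * (2 * (1 - x) * l) :=
          mul_le_mul_of_nonneg_left hub (by positivity)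
        nlinarith [p1, p2, hx2, pow_pos h0 4, pow_pos h0 5, mul_pos h0 hx2]
      -- relate the numerator to the key expression
      have hmul : ((x / (1 + x ^ 2) - 1 / (1 - x)) * Real.sqrt u -
            (u / 2 + l) * (2 * x / (2 * Real.sqrt u) / (1 + x ^ 2))) * Real.sqrt u
          = (x / (1 + x ^ 2) - 1 / (1 - x)) * u - (u / 2 + l) * (x / (1 + x ^ 2)) := by
        have e1 : (2 * x / (2 * Real.sqrt u) / (1 + x ^ 2)) * Real.sqrt u = x / (1 + x ^ 2) := by
          field_simp
        calc ((x / (1 + x ^ 2) - 1 / (1 - x)) * Real.sqrt u -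
              (u / 2 + l) * (2 * x / (2 * Real.sqrt u) / (1 + x ^ 2))) * Real.sqrt u
            = (x / (1 + x ^ 2) - 1 / (1 - x)) * (Real.sqrt u * Real.sqrt u) -
              (u / 2 + l) * ((2 * x / (2 * Real.sqrt u) / (1 + x ^ 2)) * Real.sqrt u) := by ring
          _ = (x / (1 + x ^ 2) - 1 / (1 - x)) * u - (u / 2 + l) * (x / (1 + x ^ 2)) := by
              rw [hssq, e1]
      nlinarith [key, hmul, hs]
  -- transfer to the original function
  intro a ha b hb hab
  have heq : ∀ y ∈ Set.Ioo (0:ℝ) 1,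
      Real.log (Real.sqrt (1 + y ^ 2) * (1 - y)) / Real.sqrt (Real.log (1 + y ^ 2)) = g y := by
    rintro y ⟨hy0, hy1⟩
    have hy2 : (0:ℝ) < 1 + y ^ 2 := by positivity
    have hy1' : (0:ℝ) < 1 - y := by linarith
    rw [hg]
    rw [Real.log_mul (ne_of_gt (Real.sqrt_pos.mpr hy2)) (ne_of_gt hy1'),
      Real.log_sqrt (le_of_lt hy2)]
  simp only [heq a ha, heq b hb]
  exact hanti ha hb hab
end

section
/- For all y ∈ (0, ∞), ln(1+y²)·(3y² + y + 2)/2 - y(1+y)·ln(1+y) > 0. -/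
open Real

theorem log_ineq_pos (y : ℝ) (hy : 0 < y) :
    0 < Real.log (1 + y ^ 2) * (3 * y ^ 2 + y + 2) / 2 - y * (1 + y) * Real.log (1 + y) := by
  have hx2 : (0:ℝ) < 1 + y ^ 2 := by positivity
  have hx1 : (0:ℝ) < 1 + y := by linarith
  rcases le_or_gt y 1 with h1 | h1
  · -- strict lower bound for log (1+y^2)
    have hlow : 1 - (1 + y ^ 2)⁻¹ < Real.log (1 + y ^ 2) := by
      have h := Real.log_lt_sub_one_of_pos (x := (1 + y ^ 2)⁻¹) (by positivity)
        (ne_of_lt (inv_lt_one_of_one_lt₀ (by nlinarith)))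
      rw [Real.log_inv] at h
      linarith
    -- upper bound for log (1+y)
    have hup : Real.log (1 + y) < ((1 + y) - (1 + y)⁻¹) / 2 := by
      have hs : Real.log (1 + y) < Real.sinh (Real.log (1 + y)) :=
        Real.self_lt_sinh_iff.mpr (Real.log_pos (by linarith))
      rwa [Real.sinh_log hx1] at hs
    have e1 : (1 + y ^ 2)⁻¹ * (1 + y ^ 2) = 1 := inv_mul_cancel₀ (ne_of_gt hx2)
    have e2 : (1 + y)⁻¹ * (1 + y) = 1 := inv_mul_cancel₀ (ne_of_gt hx1)
    have hyp : 0 < y * (1 + y) := by positivity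
    -- combine
    have hL : y * (1 + y) * Real.log (1 + y) < y * (1 + y) * (((1 + y) - (1 + y)⁻¹) / 2) :=
      by nlinarith
    have hL' : y * (1 + y) * (((1 + y) - (1 + y)⁻¹) / 2) = (y ^ 3 + 2 * y ^ 2) / 2 := by
      field_simp
      ring
    have hA : (1 - (1 + y ^ 2)⁻¹) * (3 * y ^ 2 + y + 2) / 2
        ≤ Real.log (1 + y ^ 2) * (3 * y ^ 2 + y + 2) / 2 := by
      have : 0 ≤ 3 * y ^ 2 + y + 2 := by positivity
      nlinarith
    have hkey : (y ^ 3 + 2 * y ^ 2) / 2 ≤ (1 - (1 + y ^ 2)⁻¹) * (3 * y ^ 2 + y + 2) / 2 := by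
      have h14 : 1 - (1 + y ^ 2)⁻¹ = y ^ 2 / (1 + y ^ 2) := by
        field_simp
        ring
      rw [h14, div_mul_eq_mul_div, div_div,
        div_le_div_iff₀ (by norm_num) (by positivity)]
      nlinarith [mul_nonneg (pow_nonneg hy.le 4) (sub_nonneg.mpr h1)]
    linarith
  · -- y ≥ 1 branch
    have hL2 : Real.log 2 ≤ Real.log (1 + y) :=
      Real.log_le_log (by norm_num) (by linarith)
    have hlog2 : 0 < Real.log 2 := Real.log_pos (by norm_num)
    have hsq : ((1 + y) ^ 2 : ℝ) ≤ 2 * (1 + y ^ 2) := by nlinarith [sq_nonneg (y - 1)]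
    have hmono : Real.log ((1 + y) ^ 2) ≤ Real.log (2 * (1 + y ^ 2)) :=
      Real.log_le_log (by positivity) hsq
    rw [Real.log_pow, Real.log_mul (by norm_num) (ne_of_gt hx2)] at hmono
    push_cast at hmono
    -- hmono : 2 * log (1+y) ≤ log 2 + log (1+y^2)
    have hA : (2 * Real.log (1 + y) - Real.log 2) * (3 * y ^ 2 + y + 2)
        ≤ Real.log (1 + y ^ 2) * (3 * y ^ 2 + y + 2) := by
      have h0 : (0:ℝ) ≤ 3 * y ^ 2 + y + 2 := by positivity
      nlinarith
    have hB : Real.log 2 * (2 * y ^ 2 + 2) ≤ Real.log (1 + y) * (2 * y ^ 2 + 2) := by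
      have h0 : (0:ℝ) ≤ 2 * y ^ 2 + 2 := by positivity
      nlinarith
    have hC : 0 < Real.log 2 * (y ^ 2 - y + 2) := by
      apply mul_pos hlog2
      nlinarith
    nlinarith
end

section
/- For all y ∈ (0, 1), ln(1+y²)·(3y² - y + 2)/2 + y(1-y)·ln(1-y) > 0. -/
open Real

set_option maxHeartbeats 2000000 in
theorem log_ineq_pos' (y : ℝ) (hy0 : 0 < y) (hy1 : y < 1) :
    0 < Real.log (1 + y ^ 2) * (3 * y ^ 2 - y + 2) / 2 + y * (1 - y) * Real.log (1 - y) := by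
  have hd1 : (0:ℝ) < 1 - y := by linarith
  have hd2 : (0:ℝ) < 1 - y ^ 2 := by nlinarith
  have hxy : |y| < 1 := by rwa [abs_of_pos hy0]
  have h2 := Real.abs_log_sub_add_sum_range_le hxy 3
  simp [Finset.sum_range_succ, abs_of_pos hy0] at h2
  have hB : Real.log (1 - y) ≥ -(y + y^2/2 + y^3/3) - y^4/(1-y) := by
    have := (abs_le.mp h2).1
    norm_num at this ⊢
    linarith
  have hm : (0:ℝ) < 3 * y ^ 2 - y + 2 := by nlinarith
  rcases le_or_gt y (11/20) with hc | hc
  · -- lower region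
    have hx2 : |(-(y^2))| < 1 := by rw [abs_neg, abs_of_pos (by positivity)]; nlinarith
    have h1 := Real.abs_log_sub_add_sum_range_le hx2 2
    simp [Finset.sum_range_succ, abs_neg, abs_of_pos (show (0:ℝ) < y^2 by positivity)] at h1
    have hA : Real.log (1 + y^2) ≥ y^2 - y^4/2 - y^6/(1-y^2) := by
      have := (abs_le.mp h1).1
      have e1 : ((y:ℝ)^2)^2 = y^4 := by ring
      have e2 : ((y:ℝ)^2)^3 = y^6 := by ring
      rw [e1, e2] at this
      norm_num at this ⊢
      linarith
    have hy2 : y^2 ≤ 121/400 := by nlinarith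
    have hA' : Real.log (1 + y^2) ≥ y^2 - y^4/2 - (400/279) * y^6 := by
      have h : y^6/(1-y^2) ≤ (400/279) * y^6 := by
        rw [div_le_iff₀ hd2]
        nlinarith [pow_pos hy0 6, mul_nonneg (pow_pos hy0 6).le (by linarith : (0:ℝ) ≤ 121/400 - y^2)]
      linarith
    have hB' : Real.log (1 - y) ≥ -(y + y^2/2 + y^3/3) - (20/9) * y^4 := by
      have h : y^4/(1-y) ≤ (20/9) * y^4 := by
        rw [div_le_iff₀ hd1]
        nlinarith [mul_nonneg (pow_pos hy0 4).le (by linarith : (0:ℝ) ≤ 11/20 - y)]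
      linarith
    have hP : (0:ℝ) < (y^2 - y^4/2 - (400/279)*y^6) * (3*y^2 - y + 2) / 2
        + y*(1-y) * (-(y + y^2/2 + y^3/3) - (20/9)*y^4) := by
      have key : (0:ℝ) < 7/6 - (59/36)*y + (43/1116)*y^2 + (200/279)*y^3 - (200/93)*y^4 := by
        nlinarith [sq_nonneg y, sq_nonneg (y - 11/20), mul_nonneg hy0.le (by linarith : (0:ℝ) ≤ 11/20 - y), mul_nonneg (mul_nonneg hy0.le hy0.le) (by linarith : (0:ℝ) ≤ 11/20 - y)]
      have hy4 : (0:ℝ) < y^4 := pow_pos hy0 4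
      have e : (y^2 - y^4/2 - (400/279)*y^6) * (3*y^2 - y + 2) / 2
        + y*(1-y) * (-(y + y^2/2 + y^3/3) - (20/9)*y^4)
        = y^4 * (7/6 - (59/36)*y + (43/1116)*y^2 + (200/279)*y^3 - (200/93)*y^4) := by ring
      rw [e]
      exact mul_pos hy4 key
    have t1 := mul_le_mul_of_nonneg_right hA' hm.le
    have t2 := mul_le_mul_of_nonneg_left hB' (mul_pos hy0 hd1).le
    nlinarith [t1, t2, hP]
  · -- upper region
    have hcc : Real.log (1 + y^2) ≥ y^2 * Real.log 2 := by
      have hconc := strictConcaveOn_log_Ioi.concaveOn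
      have h := hconc.2 (Set.mem_Ioi.mpr one_pos) (Set.mem_Ioi.mpr (by norm_num : (0:ℝ) < 2))
        (by nlinarith : (0:ℝ) ≤ 1 - y^2) (by positivity : (0:ℝ) ≤ y^2) (by ring)
      simp only [smul_eq_mul, Real.log_one, mul_zero, zero_add] at h
      have e : (1 - y^2) * 1 + y^2 * 2 = 1 + y^2 := by ring
      rw [e] at h
      linarith
    have hl2 : (0.6931471803:ℝ) < Real.log 2 := Real.log_two_gt_d9
    have hB2 : y * (1-y) * Real.log (1 - y) ≥ -(y*(1-y)*(y + y^2/2 + y^3/3)) - y^5 := by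
      have h : y*(1-y) * (-(y + y^2/2 + y^3/3) - y^4/(1-y)) = -(y*(1-y)*(y + y^2/2 + y^3/3)) - y^5 := by
        field_simp
      nlinarith [mul_le_mul_of_nonneg_left hB (mul_pos hy0 hd1).le]
    have hP2 : (0:ℝ) < (6931/10000) * y^2 * (3*y^2 - y + 2) / 2
        - y*(1-y)*(y + y^2/2 + y^3/3) - y^5 := by
      have key : (0:ℝ) < -(3069/10000) + (3069/20000)*y + (72379/60000)*y^2 - (2/3)*y^3 := by
        nlinarith [mul_nonneg (by linarith : (0:ℝ) ≤ y - 11/20) (by linarith : (0:ℝ) ≤ 1 - y), sq_nonneg (y - 11/20), sq_nonneg (1 - y)]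
      have e : (6931/10000) * y^2 * (3*y^2 - y + 2) / 2 - y*(1-y)*(y + y^2/2 + y^3/3) - y^5
        = y^2 * (-(3069/10000) + (3069/20000)*y + (72379/60000)*y^2 - (2/3)*y^3) := by ring
      rw [e]
      exact mul_pos (by positivity : (0:ℝ) < y^2) key
    have hlog1 : y^2 * (6931/10000) ≤ y^2 * Real.log 2 := by
      have := sq_nonneg y
      nlinarith
    have hmm : y^2 * (6931/10000) * (3*y^2 - y + 2) ≤ Real.log (1 + y^2) * (3*y^2 - y + 2) := by
      have h1 : y^2 * (6931/10000) * (3*y^2 - y + 2) ≤ y^2 * Real.log 2 * (3*y^2 - y + 2) :=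
        mul_le_mul_of_nonneg_right hlog1 hm.le
      have h2 : y^2 * Real.log 2 * (3*y^2 - y + 2) ≤ Real.log (1 + y^2) * (3*y^2 - y + 2) :=
        mul_le_mul_of_nonneg_right hcc hm.le
      linarith
    nlinarith [hmm, hB2, hP2]
end

section
/- For every integer ν ≥ 3, 1 < ν·∫₁^{√(ν/(ν-2))} ((ν+1)/(ν + x²))^{(ν+1)/2} dx. -/
open Real

set_option maxHeartbeats 2000000

lemma poly_ineq (n b : ℝ) (hn : 3 ≤ n) (hb1 : 1 < b) (hb3 : b^2 ≤ 3)
    (hbn : (n-2)*b^2 = n) :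
    2*(3*n+b^2+b+1) < n*(b-1)*(2*(3*n+b^2+b+1) - (n+1)*(b-1)*(b+2)) := by
  nlinarith [sq_nonneg (b-1), sq_nonneg (n*(b-1)-1), mul_pos (sub_pos.2 hb1) (by linarith : (0:ℝ) < n), sq_nonneg (b^2-1), mul_nonneg (sub_pos.2 hb1).le (sub_pos.2 hb1).le]

theorem student_t_integral_ineq (ν : ℕ) (hν : 3 ≤ ν) :
    1 < (ν : ℝ) * ∫ x in (1 : ℝ)..(Real.sqrt ((ν : ℝ) / ((ν : ℝ) - 2))),
      (((ν : ℝ) + 1) / ((ν : ℝ) + x ^ 2)) ^ (((ν : ℝ) + 1) / 2) := by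
  set n : ℝ := (ν : ℝ) with hn_def
  have hn : (3:ℝ) ≤ n := by rw [hn_def]; exact_mod_cast hν
  have hn2 : (0:ℝ) < n - 2 := by linarith
  set b : ℝ := Real.sqrt (n / (n-2)) with hb_def
  have hb2 : b^2 = n/(n-2) := Real.sq_sqrt (by positivity)
  have hbpos : 0 < b := Real.sqrt_pos.2 (by positivity)
  have hgt : 1 < n/(n-2) := by rw [lt_div_iff₀ hn2]; linarith
  have hb1 : 1 < b := by nlinarith [hb2, hbpos, hgt]
  have hbn : (n-2)*b^2 = n := by rw [hb2]; field_simp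
  have hb3 : b^2 ≤ 3 := by rw [hb2, div_le_iff₀ hn2]; linarith
  set p : ℝ := (n+1)/2 with hp_def
  have hp1 : (1:ℝ) ≤ p := by rw [hp_def]; linarith
  set u : ℝ := n + (b^2+b+1)/3 with hu_def
  have hu : 0 < u := by positivity
  set K : ℝ := ((n+1)/u) ^ p with hK_def
  have hKpos : 0 < K := Real.rpow_pos_of_pos (by positivity) _
  -- pointwise lower bound
  have key : ∀ x ∈ Set.Icc (1:ℝ) b,
      K*(1+p) - K*p/u*(n+x^2) ≤ ((n+1)/(n+x^2)) ^ p := by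
    intro x hx
    have hw : (0:ℝ) < n + x^2 := by positivity
    have hber : 1 + p*(u/(n+x^2) - 1) ≤ (u/(n+x^2)) ^ p := by
      have h0 : (0:ℝ) < u/(n+x^2) := div_pos hu hw
      have h := one_add_mul_self_le_rpow_one_add (s := u/(n+x^2) - 1)
        (by linarith) hp1
      simpa using h
    have hmid : 1 - p*((n+x^2)/u - 1) ≤ 1 + p*(u/(n+x^2) - 1) := by
      have hq : (0:ℝ) ≤ ((n+x^2)-u)^2/((n+x^2)*u) := by positivity
      have hqe : ((n+x^2)-u)^2/((n+x^2)*u) = (n+x^2)/u + u/(n+x^2) - 2 := by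
        field_simp; ring
      have hs : (0:ℝ) ≤ (n+x^2)/u + u/(n+x^2) - 2 := hqe ▸ hq
      nlinarith [mul_nonneg (by linarith : (0:ℝ) ≤ p) hs]
    have hsplit : ((n+1)/(n+x^2)) ^ p = K * (u/(n+x^2)) ^ p := by
      rw [hK_def, ← Real.mul_rpow (by positivity) (by positivity)]
      congr 1
      field_simp
    calc K*(1+p) - K*p/u*(n+x^2) = K * (1 - p*((n+x^2)/u - 1)) := by ring
      _ ≤ K * (1 + p*(u/(n+x^2) - 1)) := mul_le_mul_of_nonneg_left hmid hKpos.le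
      _ ≤ K * (u/(n+x^2)) ^ p := mul_le_mul_of_nonneg_left hber hKpos.le
      _ = ((n+1)/(n+x^2)) ^ p := hsplit.symm
  -- integrability
  have hcont : Continuous fun x : ℝ => ((n+1)/(n+x^2)) ^ p := by
    apply Continuous.rpow_const
    · exact continuous_const.div (by continuity) (fun x => by positivity)
    · intro x; right; positivity
  have hcontg : Continuous fun x : ℝ => K*(1+p) - K*p/u*(n+x^2) :=
    continuous_const.sub (continuous_const.mul (continuous_const.add (continuous_pow 2)))
  have hmono : (∫ x in (1:ℝ)..b, (K*(1+p) - K*p/u*(n+x^2)))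
      ≤ ∫ x in (1:ℝ)..b, ((n+1)/(n+x^2)) ^ p :=
    intervalIntegral.integral_mono_on hb1.le
      (hcontg.intervalIntegrable _ _) (hcont.intervalIntegrable _ _) key
  -- value of the lower integral
  have hval : (∫ x in (1:ℝ)..b, (K*(1+p) - K*p/u*(n+x^2))) = K*(b-1) := by
    have h1 : ∀ x : ℝ, K*(1+p) - K*p/u*(n+x^2)
        = (K*(1+p) - K*p/u*n) + (-(K*p/u)) * x^2 := fun x => by ring
    simp only [h1]
    rw [intervalIntegral.integral_add (g := fun x : ℝ => (-(K*p/u)) * x^2) (intervalIntegrable_const)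
      ((continuous_const.mul (continuous_pow 2)).intervalIntegrable _ _),
      intervalIntegral.integral_const_mul, integral_pow, intervalIntegral.integral_const]
    rw [hu_def, smul_eq_mul]
    have hU : (0:ℝ) < n + (b^2+b+1)/3 := by positivity
    field_simp
    ring
  -- Bernoulli on K
  have hK : 1 + p*((n+1)/u - 1) ≤ K := by
    have h0 : (0:ℝ) < (n+1)/u := by positivity
    have h := one_add_mul_self_le_rpow_one_add (s := (n+1)/u - 1) (by linarith) hp1
    simpa using h
  -- final
  have hpoly := poly_ineq n b hn hb1 hb3 hbn
  have hfin : 1 < n * (K*(b-1)) := by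
    have hDpos : (0:ℝ) < 2*(3*n+b^2+b+1) := by positivity
    have heq : n * ((1 + p*((n+1)/u - 1))*(b-1))
        = n*(b-1)*(2*(3*n+b^2+b+1) - (n+1)*(b-1)*(b+2)) / (2*(3*n+b^2+b+1)) := by
      rw [hp_def, hu_def]
      field_simp
      ring
    have hlow2 : (1:ℝ) < n * ((1 + p*((n+1)/u - 1))*(b-1)) := by
      rw [heq, lt_div_iff₀ hDpos]
      linarith [hpoly]
    have hstep : n * ((1 + p*((n+1)/u - 1))*(b-1)) ≤ n * (K*(b-1)) := by
      apply mul_le_mul_of_nonneg_left _ (by linarith : (0:ℝ) ≤ n)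
      exact mul_le_mul_of_nonneg_right hK (by linarith)
    linarith
  calc (1:ℝ) < n * (K*(b-1)) := hfin
    _ ≤ n * ∫ x in (1:ℝ)..b, ((n+1)/(n+x^2)) ^ p := by
        apply mul_le_mul_of_nonneg_left _ (by linarith : (0:ℝ) ≤ n)
        rw [← hval]; exact hmono
end

section
/- For every real ν ≥ 6, ν·[√(ν/(ν-2)) - 1]·[(ν+1)(ν-2)/(ν(ν-1))]^{(ν+1)/2} > 1. -/
open Real

theorem t_dist_ineq (ν : ℝ) (hν : 6 ≤ ν) :
    1 < ν * (Real.sqrt (ν / (ν - 2)) - 1)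
      * (((ν + 1) * (ν - 2)) / (ν * (ν - 1))) ^ ((ν + 1) / 2) := by
  have h2 : (0:ℝ) < ν - 2 := by linarith
  have h1 : (0:ℝ) < ν - 1 := by linarith
  have h0 : (0:ℝ) < ν := by linarith
  set a : ℝ := 1 + 1/(ν-2) - 1/(2*(ν-2)^2) with ha
  have ha0 : 0 ≤ a := by
    have h : 1/(2*(ν-2)^2) ≤ 1 := by
      rw [div_le_one (by positivity)]; nlinarith
    have h' : 0 ≤ 1/(ν-2) := by positivity
    simp only [ha]; linarith
  have hsq : a ≤ Real.sqrt (ν/(ν-2)) := by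
    have hrw : ν/(ν-2) = 1 + 2/(ν-2) := by field_simp; ring
    have hle : a^2 ≤ 1 + 2/(ν-2) := by
      have hd : 1 + 2/(ν-2) - a^2 = (4*(ν-2)-1)/(4*(ν-2)^4) := by
        simp only [ha]; field_simp; ring
      have hnn : 0 ≤ (4*(ν-2)-1)/(4*(ν-2)^4) := by
        apply div_nonneg (by linarith) (by positivity)
      linarith
    calc a = Real.sqrt (a^2) := (Real.sqrt_sq ha0).symm
    _ ≤ Real.sqrt (ν/(ν-2)) := by rw [hrw]; exact Real.sqrt_le_sqrt hle
  have hbern : 1 - (ν+1)/(ν*(ν-1)) ≤ (((ν + 1) * (ν - 2)) / (ν * (ν - 1))) ^ ((ν + 1) / 2) := by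
    have hs : (-1:ℝ) ≤ -(2/(ν*(ν-1))) := by
      have : 2/(ν*(ν-1)) ≤ 1 := by rw [div_le_one (by positivity)]; nlinarith
      linarith
    have hp : (1:ℝ) ≤ (ν+1)/2 := by linarith
    have := one_add_mul_self_le_rpow_one_add hs hp
    have hbase : (1 + -(2/(ν*(ν-1)))) = ((ν + 1) * (ν - 2)) / (ν * (ν - 1)) := by
      field_simp; ring
    rw [hbase] at this
    calc 1 - (ν+1)/(ν*(ν-1)) = 1 + (ν+1)/2 * -(2/(ν*(ν-1))) := by ring
    _ ≤ _ := this
  have hBpos : 0 < 1 - (ν+1)/(ν*(ν-1)) := by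
    rw [sub_pos, div_lt_one (by positivity)]; nlinarith
  have hApos : 0 < a - 1 := by
    simp only [ha]
    have : 1/(2*(ν-2)^2) < 1/(ν-2) := by
      rw [div_lt_div_iff₀ (by positivity) (by positivity)]; nlinarith
    linarith
  have key : 1 < ν * (a - 1) * (1 - (ν+1)/(ν*(ν-1))) := by
    have hd : ν * (a - 1) * (1 - (ν+1)/(ν*(ν-1)))
        = ((2*ν-5)*(ν^2-2*ν-1)) / (2*(ν-2)^2*(ν-1)) := by
      simp only [ha]; field_simp; ring
    rw [hd, lt_div_iff₀ (by positivity)]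
    nlinarith [sq_nonneg (ν-6)]
  have hstep : ν * (a - 1) * (1 - (ν+1)/(ν*(ν-1)))
      ≤ ν * (Real.sqrt (ν / (ν - 2)) - 1) * (((ν + 1) * (ν - 2)) / (ν * (ν - 1))) ^ ((ν + 1) / 2) := by
    apply mul_le_mul
    · apply mul_le_mul_of_nonneg_left (by linarith) h0.le
    · exact hbern
    · exact hBpos.le
    · exact mul_nonneg h0.le (by simp only [ha] at hsq hApos ⊢; linarith)
  linarith
end

section
/- For all y ∈ (0, 1), ((3y+2)·y/(4√(2π)·(1+y)^{3/2}))·exp(-(1+2/y)²/(2(1+y))) > Φ(-(1+2/y)/√(1+y)), where Φ is the standard normal CDF. -/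
open Real MeasureTheory ProbabilityTheory

lemma gauss_int' : Integrable (fun t : ℝ => Real.exp (-t^2/2)) := by
  have := integrable_exp_neg_mul_sq (show (0:ℝ) < 1/2 by norm_num)
  refine this.congr (Filter.EventuallyEq.of_eq (funext fun t => by ring_nf))

lemma deriv_int' (x : ℝ) (hx : 0 < x) :
    IntegrableOn (fun t : ℝ => Real.exp (-t^2/2) * (1 + 15 * (t^6)⁻¹)) (Set.Ioi x) := by
  have hbase : IntegrableOn (fun t : ℝ => (1 + 15 * (x^6)⁻¹) * Real.exp (-t^2/2)) (Set.Ioi x) :=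
    (gauss_int'.const_mul _).integrableOn
  refine hbase.mono' ?_ ?_
  · refine (ContinuousOn.aestronglyMeasurable ?_ measurableSet_Ioi)
    refine ContinuousOn.mul (Real.continuous_exp.comp (by fun_prop)).continuousOn ?_
    refine continuousOn_const.add (continuousOn_const.mul (ContinuousOn.inv₀ (by fun_prop) ?_))
    intro t ht; exact pow_ne_zero _ (hx.trans ht).ne'
  · rw [ae_restrict_iff' measurableSet_Ioi]
    filter_upwards with t ht
    have ht0 : 0 < t := hx.trans ht
    have h1 : (t^6)⁻¹ ≤ (x^6)⁻¹ := by
      apply inv_anti₀ (by positivity)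
      exact pow_le_pow_left₀ hx.le (le_of_lt ht) 6
    have h2 : (0:ℝ) < 1 + 15 * (t^6)⁻¹ := by positivity
    rw [Real.norm_eq_abs, abs_of_nonneg (by positivity)]
    rw [mul_comm]
    apply mul_le_mul_of_nonneg_right _ (Real.exp_nonneg _)
    linarith

lemma tail_eq' (x : ℝ) (hx : 0 < x) :
    ∫ t in Set.Ioi x, Real.exp (-t^2/2) * (1 + 15 * (t^6)⁻¹)
      = Real.exp (-x^2/2) * (x⁻¹ - (x^3)⁻¹ + 3 * (x^5)⁻¹) := by
  set G : ℝ → ℝ := fun t => Real.exp (-t^2/2) * (t⁻¹ - (t^3)⁻¹ + 3 * (t^5)⁻¹) with hG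
  have hderiv : ∀ t ∈ Set.Ioi x, HasDerivAt G
      (-(Real.exp (-t^2/2) * (1 + 15 * (t^6)⁻¹))) t := by
    intro t ht
    have ht0 : t ≠ 0 := (hx.trans ht).ne'
    have he : HasDerivAt (fun t : ℝ => Real.exp (-t^2/2)) ((Real.exp (-t^2/2)) * (-(2*t^1)/2)) t := by
      exact (((hasDerivAt_pow 2 t).neg).div_const 2).exp.congr_deriv (by simp only [Pi.neg_apply]; push_cast; ring)
    have h1 : HasDerivAt (fun t : ℝ => t⁻¹ - (t^3)⁻¹ + 3 * (t^5)⁻¹)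
        ((-(t^2)⁻¹) - (-(3*t^2)/(t^3)^2) + 3 * (-(5*t^4)/(t^5)^2)) t := by
      exact ((hasDerivAt_inv ht0).sub ((hasDerivAt_pow 3 t).inv (pow_ne_zero _ ht0))).add
        (((hasDerivAt_pow 5 t).inv (pow_ne_zero _ ht0)).const_mul 3) |>.congr_deriv (by push_cast; ring)
    have := he.mul h1
    refine this.congr_deriv ?_
    field_simp
    ring
  have hcont : ContinuousWithinAt G (Set.Ici x) x := by
    have : ContinuousOn G (Set.Ici x) := by
      refine ContinuousOn.mul (Real.continuous_exp.comp (by fun_prop)).continuousOn ?_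
      have hne : ∀ t ∈ Set.Ici x, t ≠ 0 := fun t ht => (lt_of_lt_of_le hx ht).ne'
      refine ((ContinuousOn.inv₀ (by fun_prop) hne).sub
        (ContinuousOn.inv₀ (by fun_prop) (fun t ht => pow_ne_zero _ (hne t ht)))).add
        (continuousOn_const.mul (ContinuousOn.inv₀ (by fun_prop) (fun t ht => pow_ne_zero _ (hne t ht))))
    exact this x Set.self_mem_Ici
  have htop : Filter.Tendsto G Filter.atTop (nhds 0) := by
    have h1 : Filter.Tendsto (fun t : ℝ => Real.exp (-t^2/2)) Filter.atTop (nhds 0) := by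
      rw [Real.tendsto_exp_comp_nhds_zero]
      apply Filter.Tendsto.atBot_div_const (by norm_num : (0:ℝ) < 2)
      exact Filter.tendsto_neg_atBot_iff.mpr (Filter.tendsto_pow_atTop (by norm_num))
    have h2 : Filter.Tendsto (fun t : ℝ => t⁻¹ - (t^3)⁻¹ + 3 * (t^5)⁻¹) Filter.atTop (nhds 0) := by
      have ha : Filter.Tendsto (fun x : ℝ => x⁻¹) Filter.atTop (nhds 0) := tendsto_inv_atTop_zero
      have h3 := ha.comp (Filter.tendsto_pow_atTop (n := 3) (by norm_num))
      have h5 := ha.comp (Filter.tendsto_pow_atTop (n := 5) (by norm_num))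
      have := (ha.sub h3).add (h5.const_mul 3)
      simpa using this
    simpa using h1.mul h2
  have key := integral_Ioi_of_hasDerivAt_of_tendsto hcont hderiv ((deriv_int' x hx).neg) htop
  have : ∫ t in Set.Ioi x, Real.exp (-t^2/2) * (1 + 15 * (t^6)⁻¹)
      = -∫ t in Set.Ioi x, -(Real.exp (-t^2/2) * (1 + 15 * (t^6)⁻¹)) := by
    rw [integral_neg]; ring
  rw [this, key]
  simp [hG]

lemma tail_bound' (x : ℝ) (hx : 0 < x) :
    ∫ t in Set.Ioi x, Real.exp (-t^2/2)
      < Real.exp (-x^2/2) * (x⁻¹ - (x^3)⁻¹ + 3 * (x^5)⁻¹) := by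
  rw [← tail_eq' x hx]
  have hg : IntegrableOn (fun t : ℝ => Real.exp (-t^2/2) * (1 + 15 * (t^6)⁻¹)) (Set.Ioi x) :=
    deriv_int' x hx
  have hf : IntegrableOn (fun t : ℝ => Real.exp (-t^2/2)) (Set.Ioi x) := gauss_int'.integrableOn
  have hsub := hg.sub hf
  have hpos : 0 < ∫ t in Set.Ioi x,
      (Real.exp (-t^2/2) * (1 + 15 * (t^6)⁻¹) - Real.exp (-t^2/2)) := by
    rw [setIntegral_pos_iff_support_of_nonneg_ae]
    · have : Function.support
          (fun t : ℝ => Real.exp (-t^2/2) * (1 + 15 * (t^6)⁻¹) - Real.exp (-t^2/2)) ∩ Set.Ioi x = Set.Ioi x := by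
        apply Set.inter_eq_self_of_subset_right
        intro t ht
        have ht0 : 0 < t := hx.trans ht
        simp only [Function.mem_support]
        have : Real.exp (-t^2/2) * (1 + 15 * (t^6)⁻¹) - Real.exp (-t^2/2)
            = Real.exp (-t^2/2) * (15 * (t^6)⁻¹) := by ring
        rw [this]
        positivity
      rw [this]
      simp
    · filter_upwards [ae_restrict_mem measurableSet_Ioi] with t ht
      have ht0 : 0 < t := hx.trans ht
      simp only [Pi.zero_apply]
      nlinarith [Real.exp_pos (-t^2/2), inv_pos.mpr (pow_pos ht0 6)]
    · exact hsub
  have := integral_sub hg hf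
  linarith [this ▸ hpos]

lemma cdf_eq' (z : ℝ) : stdNormalCDF z
    = (Real.sqrt (2 * π))⁻¹ * ∫ t in Set.Iic z, Real.exp (-t^2/2) := by
  rw [stdNormalCDF, gaussianReal_apply_eq_integral 0 one_ne_zero,
    ENNReal.toReal_ofReal (integral_nonneg fun t => gaussianPDFReal_nonneg 0 1 t)]
  rw [← integral_const_mul]
  congr 1 with t
  simp [gaussianPDFReal, neg_div]

lemma cdf_lt' (x : ℝ) (hx : 0 < x) :
    stdNormalCDF (-x) < (Real.sqrt (2 * π))⁻¹ *
      (Real.exp (-x^2/2) * (x⁻¹ - (x^3)⁻¹ + 3 * (x^5)⁻¹)) := by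
  rw [cdf_eq']
  have hsym : ∫ t in Set.Iic (-x), Real.exp (-t^2/2)
      = ∫ t in Set.Ioi x, Real.exp (-t^2/2) := by
    rw [← integral_comp_neg_Ioi]
    congr 1 with t
    rw [neg_sq]
  rw [hsym]
  have h2 : (0:ℝ) < (Real.sqrt (2 * π))⁻¹ := by
    have : (0:ℝ) < 2 * π := by positivity
    positivity
  exact mul_lt_mul_of_pos_left (tail_bound' x hx) h2

lemma coeff_ineq' (y r : ℝ) (hy0 : 0 < y) (hy1 : y < 1) (hr : 0 < r) (hr2 : r^2 = 1+y) :
    ((1+2/y)/r)⁻¹ - (((1+2/y)/r)^3)⁻¹ + 3 * ((((1+2/y)/r))^5)⁻¹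
      ≤ (3*y+2)*y / (4*((1+y)*r)) := by
  have hy2 : (0:ℝ) < 1 + y := by linarith
  have hyp2 : (0:ℝ) < y + 2 := by linarith
  have hy' := hy0.ne'
  have hr' := hr.ne'
  have hr3 : r^3 = (1+y)*r := by rw [show r^3 = r^2*r by ring, hr2]
  have hr5 : r^5 = (1+y)^2*r := by rw [show r^5 = (r^2)^2*r by ring, hr2]
  have hr4 : (1+y)^2 = r^4 := by rw [show r^4 = (r^2)^2 by ring, hr2]
  have h1 : ((1+2/y)/r)⁻¹ = r * (y/(y+2)) := by field_simp
  have h3 : (((1+2/y)/r)^3)⁻¹ = r * ((1+y)*y^3/(y+2)^3) := by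
    rw [div_pow, inv_div, hr3]; field_simp
  have h5 : (((1+2/y)/r)^5)⁻¹ = r * ((1+y)^2*y^5/(y+2)^5) := by
    rw [div_pow, inv_div, hr5]; field_simp
  have hR : (3*y+2)*y / (4*((1+y)*r)) = r * ((3*y+2)*y/(4*(1+y)^2)) := by
    rw [show (1+y)*r = r^3 by rw [hr3], hr4]
    field_simp
  rw [h1, h3, h5, hR, show r * (y/(y+2)) - r*((1+y)*y^3/(y+2)^3) + 3*(r*((1+y)^2*y^5/(y+2)^5))
    = r * (y/(y+2) - (1+y)*y^3/(y+2)^3 + 3*((1+y)^2*y^5/(y+2)^5)) by ring]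
  apply mul_le_mul_of_nonneg_left _ hr.le
  have key : 0 ≤ (3*y+2)*y*(y+2)^5 - (4*(1+y)^2*(y+2)^4*y - 4*(1+y)^3*(y+2)^2*y^3 + 12*(1+y)^4*y^5) := by
    nlinarith [mul_nonneg (pow_pos hy0 4).le (sub_nonneg.mpr hy1.le),
      mul_nonneg (pow_pos hy0 5).le (sub_nonneg.mpr hy1.le),
      mul_nonneg (pow_pos hy0 6).le (sub_nonneg.mpr hy1.le),
      mul_nonneg (pow_pos hy0 7).le (sub_nonneg.mpr hy1.le),
      mul_nonneg (pow_pos hy0 8).le (sub_nonneg.mpr hy1.le)]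
  rw [← sub_nonneg]
  have expand : (3*y+2)*y/(4*(1+y)^2) - (y/(y+2) - (1+y)*y^3/(y+2)^3 + 3*((1+y)^2*y^5/(y+2)^5))
      = ((3*y+2)*y*(y+2)^5 - (4*(1+y)^2*(y+2)^4*y - 4*(1+y)^3*(y+2)^2*y^3 + 12*(1+y)^4*y^5))
        / (4*(1+y)^2*(y+2)^5) := by
    field_simp
    ring
  rw [expand]
  positivity

theorem inverse_gaussian_ineq_1 (y : ℝ) (hy0 : 0 < y) (hy1 : y < 1) :
    stdNormalCDF (-((1 + 2 / y) / Real.sqrt (1 + y)))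
      < ((3 * y + 2) * y / (4 * Real.sqrt (2 * Real.pi) * (1 + y) ^ ((3 : ℝ) / 2)))
        * Real.exp (-(1 + 2 / y) ^ 2 / (2 * (1 + y))) := by
  have hy2 : (0:ℝ) < 1 + y := by linarith
  have hr : 0 < Real.sqrt (1 + y) := Real.sqrt_pos.mpr hy2
  have hr2 : (Real.sqrt (1 + y))^2 = 1 + y := Real.sq_sqrt hy2.le
  have ha : (0:ℝ) < 1 + 2 / y := by
    have : (0:ℝ) < 2 / y := div_pos two_pos hy0
    linarith
  have hx : 0 < (1 + 2 / y) / Real.sqrt (1 + y) := div_pos ha hr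
  have hs : (0:ℝ) < Real.sqrt (2 * π) := Real.sqrt_pos.mpr (by positivity)
  have h := cdf_lt' _ hx
  have hexp : -((1 + 2 / y) / Real.sqrt (1 + y))^2/2 = -(1 + 2 / y) ^ 2 / (2 * (1 + y)) := by
    rw [div_pow, hr2]; field_simp
  rw [hexp] at h
  refine lt_of_lt_of_le h ?_
  have hrpow : (1 + y) ^ ((3:ℝ)/2) = (1 + y) * Real.sqrt (1 + y) := by
    rw [show ((3:ℝ)/2) = (1:ℝ) + (1/2 : ℝ) by norm_num, Real.rpow_add hy2, Real.rpow_one,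
      ← Real.sqrt_eq_rpow]
  rw [hrpow]
  have hcoeff := coeff_ineq' y (Real.sqrt (1 + y)) hy0 hy1 hr hr2
  calc (Real.sqrt (2 * π))⁻¹ *
      (Real.exp (-(1 + 2 / y) ^ 2 / (2 * (1 + y))) *
        (((1 + 2 / y) / Real.sqrt (1 + y))⁻¹ - (((1 + 2 / y) / Real.sqrt (1 + y)) ^ 3)⁻¹
          + 3 * (((1 + 2 / y) / Real.sqrt (1 + y)) ^ 5)⁻¹))
      ≤ (Real.sqrt (2 * π))⁻¹ *
      (Real.exp (-(1 + 2 / y) ^ 2 / (2 * (1 + y))) *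
        ((3*y+2)*y / (4*((1+y)*Real.sqrt (1 + y))))) := by
        apply mul_le_mul_of_nonneg_left _ (by positivity)
        exact mul_le_mul_of_nonneg_left hcoeff (Real.exp_nonneg _)
    _ = (3 * y + 2) * y / (4 * Real.sqrt (2 * Real.pi) * ((1 + y) * Real.sqrt (1 + y)))
        * Real.exp (-(1 + 2 / y) ^ 2 / (2 * (1 + y))) := by
        field_simp
end
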